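/- Let H be a hypergraph and G its incidence graph. Then the r-dynamic choosability of G is at least the r-strong choosability of H: ch_r(G) ≥ ch^r(H). -/

import Mathlib

/-- `f` is an `r`-dynamic (proper) coloring of `G`. -/
def IsDynColoring {V : Type*} [Fintype V] [DecidableEq V] (G : SimpleGraph V)
    [DecidableRel G.Adj] (r : ℕ) (f : V → ℕ) : Prop :=
  (∀ u v : V, G.Adj u v → f u ≠ f v) ∧
  ∀ v : V, min r (G.degree v) ≤ ((G.neighborFinset v).image f).card

/-- The `r`-dynamic choosability of `G`. -/
noncomputable def chDyn {V : Type*} [Fintype V] [DecidableEq V] (G : SimpleGraph V)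
    [DecidableRel G.Adj] (r : ℕ) : ℕ :=
  sInf {k | ∀ L : V → Finset ℕ, (∀ v, k ≤ (L v).card) →
    ∃ f : V → ℕ, (∀ v, f v ∈ L v) ∧ IsDynColoring G r f}

/-- `f` is an `r`-strong coloring of the hypergraph with edge set `E`. -/
def IsStrongColoring {V : Type*} [DecidableEq V] (E : Finset (Finset V)) (r : ℕ)
    (f : V → ℕ) : Prop :=
  ∀ e ∈ E, min r e.card ≤ (e.image f).card

/-- The `r`-strong choosability of the hypergraph with edge set `E`. -/
noncomputable def chStrong {V : Type*} [DecidableEq V] (E : Finset (Finset V)) (r : ℕ) : ℕ :=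
  sInf {k | ∀ L : V → Finset ℕ, (∀ v, k ≤ (L v).card) →
    ∃ f : V → ℕ, (∀ v, f v ∈ L v) ∧ IsStrongColoring E r f}

/-- The incidence graph of the hypergraph with edge set `E`. -/
def incidenceGraph {V : Type*} [DecidableEq V] (E : Finset (Finset V)) :
    SimpleGraph (V ⊕ {e // e ∈ E}) where
  Adj a b :=
    (∃ v e, a = Sum.inl v ∧ b = Sum.inr e ∧ v ∈ e.1) ∨
    (∃ v e, b = Sum.inl v ∧ a = Sum.inr e ∧ v ∈ e.1)
  symm := by
    constructor
    rintro a b (⟨v, e, h1, h2, h3⟩ | ⟨v, e, h1, h2, h3⟩)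
    · exact Or.inr ⟨v, e, h1, h2, h3⟩
    · exact Or.inl ⟨v, e, h1, h2, h3⟩
  loopless := by constructor; rintro a (⟨v, e, h1, h2, _⟩ | ⟨v, e, h1, h2, _⟩) <;> simp_all

noncomputable instance {V : Type*} [DecidableEq V] (E : Finset (Finset V)) :
    DecidableRel (incidenceGraph E).Adj := fun _ _ => Classical.dec _

/- In the incidence graph the neighbourhood of the edge-vertex `e` is `e` itself, so a
dynamic colouring of the incidence graph restricts on `V` to a strong colouring of the hypergraph;
any lists on `V` extend to the edge-vertices. The only subtlety is that `chDyn` is an `sInf`, so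
one must know the defining set is nonempty: lists of size `|V(G)|` admit an injective choice by
Hall's theorem, and an injective colouring is dynamic. -/

theorem exists_injective_mem_of_card_le {ι α : Type*} [Fintype ι] [DecidableEq α]
    (L : ι → Finset α) (hL : ∀ i, Fintype.card ι ≤ (L i).card) :
    ∃ f : ι → α, Function.Injective f ∧ ∀ i, f i ∈ L i := by
  refine (Finset.all_card_le_biUnion_card_iff_exists_injective L).mp fun s => ?_
  rcases s.eq_empty_or_nonempty with rfl | ⟨i, hi⟩
  · simp
  · calc s.card ≤ Fintype.card ι := s.card_le_univ
      _ ≤ (L i).card := hL i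
      _ ≤ (s.biUnion L).card := Finset.card_le_card (Finset.subset_biUnion_of_mem L hi)

section Dynamic

variable {V : Type*} [Fintype V] [DecidableEq V] (G : SimpleGraph V) [DecidableRel G.Adj]

theorem isDynColoring_of_injective (r : ℕ) {f : V → ℕ} (hf : Function.Injective f) :
    IsDynColoring G r f := by
  refine ⟨fun u v huv h => G.ne_of_adj huv (hf h), fun v => ?_⟩
  rw [Finset.card_image_of_injective _ hf, SimpleGraph.card_neighborFinset_eq_degree]
  exact min_le_right _ _

theorem exists_isDynColoring_of_chDyn_le (r : ℕ) (L : V → Finset ℕ)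
    (hL : ∀ v, chDyn G r ≤ (L v).card) :
    ∃ f : V → ℕ, (∀ v, f v ∈ L v) ∧ IsDynColoring G r f := by
  have hne : ∃ k, ∀ L : V → Finset ℕ, (∀ v, k ≤ (L v).card) →
      ∃ f : V → ℕ, (∀ v, f v ∈ L v) ∧ IsDynColoring G r f := by
    refine ⟨Fintype.card V, fun L hL => ?_⟩
    obtain ⟨f, hf, hfL⟩ := exists_injective_mem_of_card_le L hL
    exact ⟨f, hfL, isDynColoring_of_injective G r hf⟩
  exact Nat.sInf_mem hne L hL

end Dynamic

section Incidence

variable {V : Type*} [DecidableEq V] (E : Finset (Finset V))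

theorem incidenceGraph_adj_inl_inr {v : V} {e : {e // e ∈ E}} :
    (incidenceGraph E).Adj (Sum.inl v) (Sum.inr e) ↔ v ∈ e.1 := by
  simp [incidenceGraph]

theorem incidenceGraph_not_adj_inr_inr (e e' : {e // e ∈ E}) :
    ¬(incidenceGraph E).Adj (Sum.inr e) (Sum.inr e') := by
  simp [incidenceGraph]

variable [Fintype V]

theorem incidenceGraph_neighborFinset_inr (e : {e // e ∈ E}) :
    (incidenceGraph E).neighborFinset (Sum.inr e) = e.1.image Sum.inl := by
  ext (v | e') <;> rw [SimpleGraph.mem_neighborFinset]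
  · simp [(incidenceGraph E).adj_comm, incidenceGraph_adj_inl_inr]
  · simp [incidenceGraph_not_adj_inr_inr]

theorem incidenceGraph_degree_inr (e : {e // e ∈ E}) :
    (incidenceGraph E).degree (Sum.inr e) = e.1.card := by
  rw [← SimpleGraph.card_neighborFinset_eq_degree, incidenceGraph_neighborFinset_inr,
    Finset.card_image_of_injective _ Sum.inl_injective]

theorem IsDynColoring.isStrongColoring_comp_inl {r : ℕ} {f : V ⊕ {e // e ∈ E} → ℕ}
    (hf : IsDynColoring (incidenceGraph E) r f) : IsStrongColoring E r (f ∘ Sum.inl) := by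
  intro e he
  have h := hf.2 (Sum.inr ⟨e, he⟩)
  rwa [incidenceGraph_degree_inr, incidenceGraph_neighborFinset_inr, Finset.image_image] at h

end Incidence

theorem chDyn_incidence_ge_chStrong {V : Type*} [Fintype V] [DecidableEq V]
    (E : Finset (Finset V)) (r : ℕ) :
    chStrong E r ≤ chDyn (incidenceGraph E) r := by
  refine Nat.sInf_le fun L hL => ?_
  obtain ⟨f, hfL, hf⟩ := exists_isDynColoring_of_chDyn_le (incidenceGraph E) r
    (Sum.elim L fun _ => Finset.range (chDyn (incidenceGraph E) r))
    (by rintro (v | e); exacts [hL v, (Finset.card_range _).ge])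
  exact ⟨f ∘ Sum.inl, fun v => hfL (Sum.inl v), hf.isStrongColoring_comp_inl E⟩
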